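/- arXiv:2405.16410 — 3 statements merged into one kernel-verified Lean document; each statement's English description precedes it below -/
import Mathlib

section
/- Let L = ℤⁿ and J : L×L → ℤ a bilinear form. Suppose f and g are automorphisms of L and B, C : L×L → ℤ are bilinear forms satisfying B − Bᵗ = J − f*J and C − Cᵗ = J − g*J. Then the bilinear form D = C + g*B satisfies D − Dᵗ = J − (f∘g)*J, and the bilinear form B' = −(f⁻¹)*B satisfies B' − (B')ᵗ = J − (f⁻¹)*J. Consequently the set Õ = {(f, B) : B − Bᵗ = J − f*J} is closed under the multiplication (f,B)(g,C) = (f∘g, C + g*B) and under the inversion (f,B) ↦ (f⁻¹, −(f⁻¹)*B), i.e. it is a subgroup of the semidirect product of the automorphism group of L with the bilinear forms. -/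
/-- The set `Õ = {(f,B) | B − Bᵗ = J − f*J}` is closed under the semidirect-product
multiplication `(f,B)(g,C) = (f∘g, C + g*B)` and inversion `(f,B) ↦ (f⁻¹, −(f⁻¹)*B)`
(paper, Section 6): if `B − Bᵗ = J − f*J` and `C − Cᵗ = J − g*J`, then
`D = C + g*B` satisfies `D − Dᵗ = J − (f∘g)*J`, and `B' = −(f⁻¹)*B` satisfies
`B' − B'ᵗ = J − (f⁻¹)*J`. -/
theorem stmt8 (n : ℕ) (J B C : (Fin n → ℤ) →ₗ[ℤ] (Fin n → ℤ) →ₗ[ℤ] ℤ)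
    (f g : (Fin n → ℤ) ≃ₗ[ℤ] (Fin n → ℤ))
    (hB : ∀ m m', B m m' - B m' m = J m m' - J (f m) (f m'))
    (hC : ∀ m m', C m m' - C m' m = J m m' - J (g m) (g m')) :
    (∀ m m', (C m m' + B (g m) (g m')) - (C m' m + B (g m') (g m))
        = J m m' - J (f (g m)) (f (g m'))) ∧
    (∀ m m', (-(B (f.symm m) (f.symm m'))) - (-(B (f.symm m') (f.symm m)))
        = J m m' - J (f.symm m) (f.symm m')) := by
  constructor
  · intro m m'
    have h1 := hB (g m) (g m')
    have h2 := hC m m'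
    linarith
  · intro m m'
    have h1 := hB (f.symm m) (f.symm m')
    rw [f.apply_symm_apply, f.apply_symm_apply] at h1
    linarith
end

section
/- Let I : ℝⁿ×ℝⁿ → ℝ be a bilinear form with I(m,n) ∈ ℤ for all m, n ∈ ℤⁿ. For (m,n) ∈ ℤⁿ×ℤⁿ define maps on ℝⁿ×ℝⁿ×ℂˣ by ρ₁(m,n)(x,y,w) = (x+m, y+n, w·exp(2πi·I(x,n))) and ρ₂(m,n)(x,y,z) = (x+m, y+n, z·exp(−2πi·I(m,y))). Then ρ₁ and ρ₂ are both actions of the group ℤⁿ×ℤⁿ on ℝⁿ×ℝⁿ×ℂˣ, and the bijection φ(x,y,w) = (x, y, w·exp(−2πi·I(x,y))) is equivariant, i.e. φ(ρ₁(m,n)(x,y,w)) = ρ₂(m,n)(φ(x,y,w)) for all (m,n) ∈ ℤⁿ×ℤⁿ and (x,y,w) ∈ ℝⁿ×ℝⁿ×ℂˣ. -/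
/-- `exp(2πi r)` as an element of `ℂˣ`. -/
noncomputable def uexp (r : ℝ) : ℂˣ :=
  Units.mk0 (Complex.exp (2 * (Real.pi : ℂ) * Complex.I * (r : ℂ))) (Complex.exp_ne_zero _)

/-- The action `ρ₁(m,n)(x,y,w) = (x+m, y+n, w·exp(2πi·I(x,n)))`. -/
noncomputable def rho1 {n : ℕ} (I : (Fin n → ℝ) →ₗ[ℝ] (Fin n → ℝ) →ₗ[ℝ] ℝ)
    (p : (Fin n → ℤ) × (Fin n → ℤ)) :
    (Fin n → ℝ) × (Fin n → ℝ) × ℂˣ → (Fin n → ℝ) × (Fin n → ℝ) × ℂˣ :=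
  fun q => (q.1 + fun j => ((p.1 j : ℝ)),
    (q.2.1 + fun j => ((p.2 j : ℝ)),
     q.2.2 * uexp (I q.1 (fun j => ((p.2 j : ℝ))))))

/-- The action `ρ₂(m,n)(x,y,z) = (x+m, y+n, z·exp(−2πi·I(m,y)))`. -/
noncomputable def rho2 {n : ℕ} (I : (Fin n → ℝ) →ₗ[ℝ] (Fin n → ℝ) →ₗ[ℝ] ℝ)
    (p : (Fin n → ℤ) × (Fin n → ℤ)) :
    (Fin n → ℝ) × (Fin n → ℝ) × ℂˣ → (Fin n → ℝ) × (Fin n → ℝ) × ℂˣ :=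
  fun q => (q.1 + fun j => ((p.1 j : ℝ)),
    (q.2.1 + fun j => ((p.2 j : ℝ)),
     q.2.2 * uexp (-(I (fun j => ((p.1 j : ℝ))) q.2.1))))

/-- The map `φ(x,y,w) = (x, y, w·exp(−2πi·I(x,y)))`. -/
noncomputable def phiMap {n : ℕ} (I : (Fin n → ℝ) →ₗ[ℝ] (Fin n → ℝ) →ₗ[ℝ] ℝ) :
    (Fin n → ℝ) × (Fin n → ℝ) × ℂˣ → (Fin n → ℝ) × (Fin n → ℝ) × ℂˣ :=
  fun q => (q.1, (q.2.1, q.2.2 * uexp (-(I q.1 q.2.1))))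

lemma uexp_add (a b : ℝ) : uexp (a + b) = uexp a * uexp b := by
  ext
  simp [uexp, ← Complex.exp_add]
  ring_nf

lemma uexp_zero : uexp 0 = 1 := by
  ext; simp [uexp]

lemma uexp_int (k : ℤ) : uexp (k : ℝ) = 1 := by
  ext
  have := Complex.exp_int_mul_two_pi_mul_I k
  simpa [uexp, mul_comm, mul_assoc, mul_left_comm] using this

lemma uexp_neg (a : ℝ) : uexp (-a) = (uexp a)⁻¹ := by
  rw [eq_inv_iff_mul_eq_one, ← uexp_add]
  simp [uexp_zero]

/-- Paper's Theorem `inertia groupoid`: for a bilinear form `I` on `ℝⁿ` taking integer values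
on `ℤⁿ`, the formulas `ρ₁` and `ρ₂` define actions of `ℤⁿ × ℤⁿ` on `ℝⁿ × ℝⁿ × ℂˣ`, and
`φ(x,y,w) = (x,y,w·exp(−2πi·I(x,y)))` is an equivariant bijection between them. -/
theorem stmt11 (n : ℕ) (I : (Fin n → ℝ) →ₗ[ℝ] (Fin n → ℝ) →ₗ[ℝ] ℝ)
    (hI : ∀ m m' : Fin n → ℤ, ∃ k : ℤ,
      I (fun j => ((m j : ℝ))) (fun j => ((m' j : ℝ))) = (k : ℝ)) :
    rho1 I 0 = id ∧
    (∀ p q : (Fin n → ℤ) × (Fin n → ℤ), rho1 I (p + q) = rho1 I p ∘ rho1 I q) ∧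
    rho2 I 0 = id ∧
    (∀ p q : (Fin n → ℤ) × (Fin n → ℤ), rho2 I (p + q) = rho2 I p ∘ rho2 I q) ∧
    Function.Bijective (phiMap I) ∧
    (∀ (p : (Fin n → ℤ) × (Fin n → ℤ)) (v : (Fin n → ℝ) × (Fin n → ℝ) × ℂˣ),
      phiMap I (rho1 I p v) = rho2 I p (phiMap I v)) := by
  have key : ∀ (m m' : Fin n → ℤ),
      uexp (I (fun j => ((m j : ℝ))) (fun j => ((m' j : ℝ)))) = 1 := by
    intro m m'
    obtain ⟨k, hk⟩ := hI m m'
    rw [hk, uexp_int]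
  have h0 : (fun _ : Fin n => (0 : ℝ)) = 0 := rfl
  refine ⟨?_, ?_, ?_, ?_, ?_, ?_⟩
  · funext v
    simp only [rho1, Prod.fst_zero, Prod.snd_zero, Pi.zero_apply, Int.cast_zero, h0]
    simp [uexp_zero]
  · intro p q
    funext v
    have h1 : (fun j : Fin n => (((p + q).1 j : ℝ))) =
        (fun j => ((q.1 j : ℝ))) + fun j => ((p.1 j : ℝ)) := by
      funext j; simp [Prod.fst_add]; try push_cast; try ring
    have h2 : (fun j : Fin n => (((p + q).2 j : ℝ))) =
        (fun j => ((q.2 j : ℝ))) + fun j => ((p.2 j : ℝ)) := by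
      funext j; simp [Prod.snd_add]; try push_cast; try ring
    simp only [rho1, Function.comp_apply, h1, h2]
    refine Prod.ext ?_ (Prod.ext ?_ ?_)
    · funext j; simp; try ring
    · funext j; simp; try ring
    · simp only [map_add, LinearMap.add_apply, uexp_add, key]
      simp [mul_assoc, mul_comm, mul_left_comm]
  · funext v
    simp only [rho2, Prod.fst_zero, Prod.snd_zero, Pi.zero_apply, Int.cast_zero, h0]
    simp [uexp_zero]
  · intro p q
    funext v
    have h1 : (fun j : Fin n => (((p + q).1 j : ℝ))) =
        (fun j => ((p.1 j : ℝ))) + fun j => ((q.1 j : ℝ)) := by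
      funext j; simp [Prod.fst_add]; try push_cast; try ring
    have h2 : (fun j : Fin n => (((p + q).2 j : ℝ))) =
        (fun j => ((q.2 j : ℝ))) + fun j => ((p.2 j : ℝ)) := by
      funext j; simp [Prod.snd_add]; try push_cast; try ring
    simp only [rho2, Function.comp_apply, h1, h2]
    refine Prod.ext ?_ (Prod.ext ?_ ?_)
    · funext j; simp; try ring
    · funext j; simp; try ring
    · simp only [map_add, LinearMap.add_apply, neg_add, uexp_add, uexp_neg, key]
      simp [mul_assoc, mul_comm, mul_left_comm]
  · constructor
    · intro a b hab
      simp only [phiMap, Prod.mk.injEq] at hab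
      obtain ⟨hx, hy, hw⟩ := hab
      rw [hx, hy] at hw
      exact Prod.ext hx (Prod.ext hy (mul_right_cancel hw))
    · intro b
      refine ⟨(b.1, b.2.1, b.2.2 * uexp (I b.1 b.2.1)), ?_⟩
      simp [phiMap, uexp_neg, mul_assoc]
  · intro p v
    simp only [phiMap, rho1, rho2]
    refine Prod.ext rfl (Prod.ext rfl ?_)
    rw [mul_assoc, mul_assoc, ← uexp_add, ← uexp_add]
    congr 1
    obtain ⟨k, hk⟩ := hI p.1 p.2
    have harg : I v.1 (fun j => ((p.2 j : ℝ))) +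
        -(I (v.1 + fun j => ((p.1 j : ℝ))) (v.2.1 + fun j => ((p.2 j : ℝ)))) =
        (-(I v.1 v.2.1) + -(I (fun j => ((p.1 j : ℝ))) v.2.1)) + (-k : ℝ) := by
      rw [← hk]
      simp only [map_add, LinearMap.add_apply]
      ring
    rw [harg, uexp_add]
    have : ((-k : ℝ)) = (((-k : ℤ) : ℝ)) := by push_cast; ring
    rw [this, uexp_int, mul_one]
end

section
/- Let R be a commutative ring and σ : R → R a ring automorphism, and let F_σ : Mod(R) → Mod(R) be the restriction-of-scalars endofunctor of the category of R-modules along σ (F_σ(M) has the same underlying abelian group as M with new action a •' m = σ(a)•m, and F_σ is the identity on morphisms). Then the map sending a natural transformation η : 𝟭 → F_σ to the element η_R(1) ∈ R is a bijection from the set of natural transformations 𝟭 → F_σ onto the set {r ∈ R | σ(a)·r = a·r for all a ∈ R}. In particular, if R is an integral domain and σ ≠ id, then the only natural transformation 𝟭 → F_σ is zero, while for σ = id the natural transformations form a set in bijection with R. -/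
open CategoryTheory

/-- For `σ : R ≃+* R`, the value of a natural transformation `η : 𝟭 → F_σ`
(restriction of scalars along `σ`) at `1 ∈ R`, an element of `R` (the underlying
abelian group of `F_σ(R)` is that of `R`). -/
noncomputable def natTransValue {R : Type u} [CommRing R] (σ : R ≃+* R)
    (η : 𝟭 (ModuleCat.{u} R) ⟶ ModuleCat.restrictScalars (σ : R →+* R)) : R :=
  show R from η.app (ModuleCat.of R R) (1 : R)

lemma natTrans_app_eq {R : Type u} [CommRing R] (σ : R ≃+* R)
    (η : 𝟭 (ModuleCat.{u} R) ⟶ ModuleCat.restrictScalars (σ : R →+* R))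
    (M : ModuleCat.{u} R) (m : M) :
    (η.app M m : M) = natTransValue σ η • m := by
  have h := η.naturality (X := ModuleCat.of R R) (Y := M)
    (ModuleCat.ofHom (LinearMap.toSpanSingleton R M m))
  have h2 := ConcreteCategory.congr_hom h
    (show (𝟭 (ModuleCat.{u} R)).obj (ModuleCat.of R R) from (1 : R))
  simp only [Functor.id_obj, Functor.id_map, ConcreteCategory.comp_apply, ModuleCat.hom_ofHom, Function.comp_apply,
    ModuleCat.restrictScalars.map_apply] at h2
  erw [LinearMap.toSpanSingleton_apply, LinearMap.toSpanSingleton_apply, one_smul] at h2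
  exact h2

lemma natTrans_comm {R : Type u} [CommRing R] (σ : R ≃+* R)
    (η : 𝟭 (ModuleCat.{u} R) ⟶ ModuleCat.restrictScalars (σ : R →+* R)) (a : R) :
    σ a * natTransValue σ η = a * natTransValue σ η := by
  set r := natTransValue σ η with hr
  have e1 : (η.app (ModuleCat.of R R) (a : R) : R) = r * a := by
    have := natTrans_app_eq σ η (ModuleCat.of R R) a
    simpa [smul_eq_mul] using this
  have e2 : (η.app (ModuleCat.of R R) (a : R) : R) = σ a * r := by
    have hs := map_smulₛₗ ((ModuleCat.semilinearMapAddEquiv (σ : R →+* R)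
      (ModuleCat.of R R) (ModuleCat.of R R)).symm (η.app (ModuleCat.of R R))) a (1 : R)
    erw [smul_eq_mul, mul_one, smul_eq_mul] at hs
    exact hs
  rw [← e2, e1, mul_comm]

/-- Construction of a natural transformation from an element commuting appropriately. -/
noncomputable def mkNatTrans {R : Type u} [CommRing R] (σ : R ≃+* R) (r : R)
    (hr : ∀ a : R, σ a * r = a * r) :
    𝟭 (ModuleCat.{u} R) ⟶ ModuleCat.restrictScalars (σ : R →+* R) where
  app M := ModuleCat.semilinearMapAddEquiv (σ : R →+* R) M M
    { toFun := fun m => r • m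
      map_add' := fun x y => smul_add r x y
      map_smul' := fun a m => by
        show r • (a • m) = σ a • (r • m)
        rw [smul_smul, smul_smul, hr a, mul_comm] }
  naturality M N f := by
    apply ConcreteCategory.hom_ext
    intro m
    show (r • f m : N) = f (r • m)
    exact (f.hom.map_smul r m).symm

/-- The categorical trace computation of the paper: for a commutative ring `R` and a ring
automorphism `σ`, the natural transformations `𝟭 → F_σ` (restriction of scalars along `σ`)
are in bijection, via `η ↦ η.app R 1`, with `{r : R | ∀ a, σ(a)·r = a·r}`. In particular,
over a domain with `σ ≠ id` the only natural transformation is zero, while for `σ = id`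
they are in bijection with `R`. -/
theorem stmt13 {R : Type u} [CommRing R] (σ : R ≃+* R) :
    (∀ η : 𝟭 (ModuleCat.{u} R) ⟶ ModuleCat.restrictScalars (σ : R →+* R),
      ∀ a : R, σ a * natTransValue σ η = a * natTransValue σ η) ∧
    (∀ η₁ η₂ : 𝟭 (ModuleCat.{u} R) ⟶ ModuleCat.restrictScalars (σ : R →+* R),
      natTransValue σ η₁ = natTransValue σ η₂ → η₁ = η₂) ∧
    (∀ r : R, (∀ a : R, σ a * r = a * r) →
      ∃ η : 𝟭 (ModuleCat.{u} R) ⟶ ModuleCat.restrictScalars (σ : R →+* R),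
        natTransValue σ η = r) ∧
    (IsDomain R → σ ≠ RingEquiv.refl R →
      ∀ η : 𝟭 (ModuleCat.{u} R) ⟶ ModuleCat.restrictScalars (σ : R →+* R),
        ∀ M : ModuleCat.{u} R, η.app M = 0) ∧
    (σ = RingEquiv.refl R → Function.Bijective (natTransValue σ)) := by
  have hinj : ∀ η₁ η₂ : 𝟭 (ModuleCat.{u} R) ⟶ ModuleCat.restrictScalars (σ : R →+* R),
      natTransValue σ η₁ = natTransValue σ η₂ → η₁ = η₂ := by
    intro η₁ η₂ h
    apply NatTrans.ext
    funext M
    apply ConcreteCategory.hom_ext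
    intro m
    rw [show (η₁.app M m : M) = _ from natTrans_app_eq σ η₁ M m,
      show (η₂.app M m : M) = _ from natTrans_app_eq σ η₂ M m, h]
  have hsurj : ∀ r : R, (∀ a : R, σ a * r = a * r) →
      ∃ η : 𝟭 (ModuleCat.{u} R) ⟶ ModuleCat.restrictScalars (σ : R →+* R),
        natTransValue σ η = r := by
    intro r hr
    refine ⟨mkNatTrans σ r hr, ?_⟩
    show r • (1 : R) = r
    rw [smul_eq_mul, mul_one]
  refine ⟨natTrans_comm σ, hinj, hsurj, ?_, ?_⟩
  · intro _ hσ η M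
    have hr : natTransValue σ η = 0 := by
      obtain ⟨a, ha⟩ : ∃ a : R, σ a ≠ a := by
        by_contra h
        push_neg at h
        exact hσ (RingEquiv.ext h)
      have hc := natTrans_comm σ η a
      have h0 : (σ a - a) * natTransValue σ η = 0 := by
        rw [sub_mul, hc, sub_self]
      rcases mul_eq_zero.mp h0 with h | h
      · exact absurd (sub_eq_zero.mp h) ha
      · exact h
    apply ConcreteCategory.hom_ext
    intro m
    rw [show (η.app M m : M) = _ from natTrans_app_eq σ η M m, hr, zero_smul]
    rfl
  · intro hσ
    exact ⟨fun η₁ η₂ h => hinj η₁ η₂ h,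
      fun r => hsurj r (fun a => by rw [hσ]; rfl)⟩
end
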